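/- arXiv:2512.01529 — 3 statements merged into one kernel-verified Lean document; each statement's English description precedes it below -/
import Mathlib

section
/- (Madelung identity for pure states) Let ħ > 0 and let ψ ∈ C¹(ℝ^d; ℂ) with ψ(x) ≠ 0 for all x ∈ ℝ^d and ‖ψ‖_{L²(ℝ^d)} = 1. Define R̃(x,y) := ψ(x + ħy/2)·conj(ψ(x − ħy/2)). Then for all j, k = 1, …, d, the identity ∂_{y_j}∂_{y_k}R̃(x,y) = (∂_{y_j}R̃(x,y)·∂_{y_k}R̃(x,y))/R̃(x,y) + (ħ²/4)·R̃(x,y)·∂_{x_j}( ∂_{x_k}R̃(x,y) / R̃(x,y) ) holds in the sense of distributions on ℝ^d_x × ℝ^d_y. -/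
open MeasureTheory Real Complex Filter Topology ENNReal

noncomputable section

/-- The pure-state density matrix in center-of-mass / rescaled relative variables:
`R̃(x,y) := ψ(x + ħy/2)·conj(ψ(x − ħy/2))`. -/
def Rtil (d : ℕ) (hbar : ℝ) (ψ : (Fin d → ℝ) → ℂ)
    (p : (Fin d → ℝ) × (Fin d → ℝ)) : ℂ :=
  ψ (p.1 + (hbar / 2) • p.2) * starRingEnd ℂ (ψ (p.1 - (hbar / 2) • p.2))

/-- Partial derivative in the direction `x_j` of a function on `ℝ^d_x × ℝ^d_y`. -/
def dX (d : ℕ) (j : Fin d) (F : (Fin d → ℝ) × (Fin d → ℝ) → ℂ)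
    (p : (Fin d → ℝ) × (Fin d → ℝ)) : ℂ :=
  fderiv ℝ F p (Pi.single j (1 : ℝ), 0)

/-- Partial derivative in the direction `y_j` of a function on `ℝ^d_x × ℝ^d_y`. -/
def dY (d : ℕ) (j : Fin d) (F : (Fin d → ℝ) × (Fin d → ℝ) → ℂ)
    (p : (Fin d → ℝ) × (Fin d → ℝ)) : ℂ :=
  fderiv ℝ F p (0, Pi.single j (1 : ℝ))



/-- vanishing of the integral of `g · ∂_v Φ` when `g` is continuous and invariant
along the direction `v`, and `Φ` is `C¹` with compact support. -/
lemma key_zero {d : ℕ} (g : (Fin d → ℝ) × (Fin d → ℝ) → ℂ) (hgc : Continuous g)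
    (v : (Fin d → ℝ) × (Fin d → ℝ)) (hg : ∀ p (t : ℝ), g (p + t • v) = g p)
    (Φ : (Fin d → ℝ) × (Fin d → ℝ) → ℂ) (hΦ : ContDiff ℝ 1 Φ) (hΦs : HasCompactSupport Φ) :
    ∫ p, g p * fderiv ℝ Φ p v = 0 := by
  haveI : Measure.IsAddHaarMeasure (volume : Measure ((Fin d → ℝ) × (Fin d → ℝ))) :=
    Measure.prod.instIsAddHaarMeasure _ _
  have hline : ∀ p, HasLineDerivAt ℝ g (0 : ℂ) p v := by
    intro p
    have h : (fun t : ℝ => g (p + t • v)) = fun _ => g p := funext fun t => hg p t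
    unfold HasLineDerivAt
    rw [h]
    exact hasDerivAt_const _ _
  have hΦd : ∀ p, HasLineDerivAt ℝ Φ (fderiv ℝ Φ p v) p v := fun p =>
    ((hΦ.differentiable one_ne_zero p).hasFDerivAt).hasLineDerivAt v
  have h := integral_bilinear_hasLineDerivAt_right_eq_neg_left_of_integrable
    (μ := volume) (B := ContinuousLinearMap.mul ℝ ℂ) ?_ ?_ ?_ (fun p _ => hline p) (fun p _ => hΦd p)
  · simpa using h
  · simp only [ContinuousLinearMap.mul_apply', zero_mul]
    exact integrable_zero _ _ _
  · simp only [ContinuousLinearMap.mul_apply']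
    exact (hgc.mul ((ContinuousLinearMap.apply ℝ ℂ v).continuous.comp
      (hΦ.continuous_fderiv one_ne_zero))).integrable_of_hasCompactSupport
      ((hΦs.fderiv_apply ℝ v).mul_left)
  · simp only [ContinuousLinearMap.mul_apply']
    exact (hgc.mul hΦ.continuous).integrable_of_hasCompactSupport hΦs.mul_left

/-- Explicit formula for the Fréchet derivative of `Rtil`. -/
lemma fderiv_Rtil {d : ℕ} (hbar : ℝ) (ψ : (Fin d → ℝ) → ℂ) (hψ : ContDiff ℝ 1 ψ)
    (p v : (Fin d → ℝ) × (Fin d → ℝ)) :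
    fderiv ℝ (Rtil d hbar ψ) p v =
      fderiv ℝ ψ (p.1 + (hbar / 2) • p.2) (v.1 + (hbar / 2) • v.2) *
        starRingEnd ℂ (ψ (p.1 - (hbar / 2) • p.2)) +
      ψ (p.1 + (hbar / 2) • p.2) *
        starRingEnd ℂ (fderiv ℝ ψ (p.1 - (hbar / 2) • p.2) (v.1 - (hbar / 2) • v.2)) := by
  set L₁ : ((Fin d → ℝ) × (Fin d → ℝ)) →L[ℝ] (Fin d → ℝ) :=
    ContinuousLinearMap.fst ℝ _ _ + (hbar / 2) • ContinuousLinearMap.snd ℝ _ _ with hL₁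
  set L₂ : ((Fin d → ℝ) × (Fin d → ℝ)) →L[ℝ] (Fin d → ℝ) :=
    ContinuousLinearMap.fst ℝ _ _ - (hbar / 2) • ContinuousLinearMap.snd ℝ _ _ with hL₂
  have hL₁app : ∀ q : (Fin d → ℝ) × (Fin d → ℝ), L₁ q = q.1 + (hbar / 2) • q.2 := by
    intro q; simp [hL₁]
  have hL₂app : ∀ q : (Fin d → ℝ) × (Fin d → ℝ), L₂ q = q.1 - (hbar / 2) • q.2 := by
    intro q; simp [hL₂, sub_eq_add_neg]
  have hA : HasFDerivAt (fun q : (Fin d → ℝ) × (Fin d → ℝ) => ψ (L₁ q))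
      ((fderiv ℝ ψ (L₁ p)).comp L₁) p :=
    ((hψ.differentiable one_ne_zero (L₁ p)).hasFDerivAt).comp p L₁.hasFDerivAt
  have hB : HasFDerivAt (fun q : (Fin d → ℝ) × (Fin d → ℝ) => starRingEnd ℂ (ψ (L₂ q)))
      ((Complex.conjCLE.toContinuousLinearMap).comp ((fderiv ℝ ψ (L₂ p)).comp L₂)) p := by
    have h1 : HasFDerivAt (fun q : (Fin d → ℝ) × (Fin d → ℝ) => ψ (L₂ q))
        ((fderiv ℝ ψ (L₂ p)).comp L₂) p :=
      ((hψ.differentiable one_ne_zero (L₂ p)).hasFDerivAt).comp p L₂.hasFDerivAt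
    have h2 := (Complex.conjCLE.toContinuousLinearMap.hasFDerivAt
      (x := ψ (L₂ p))).comp p h1
    simpa [Function.comp_def] using h2
  have hR : HasFDerivAt (Rtil d hbar ψ)
      ((ψ (L₁ p)) • ((Complex.conjCLE.toContinuousLinearMap).comp
          ((fderiv ℝ ψ (L₂ p)).comp L₂)) +
        (starRingEnd ℂ (ψ (L₂ p))) • ((fderiv ℝ ψ (L₁ p)).comp L₁)) p := by
    have := hA.mul hB
    have heq : (fun q : (Fin d → ℝ) × (Fin d → ℝ) =>
        ψ (L₁ q) * starRingEnd ℂ (ψ (L₂ q))) = Rtil d hbar ψ := by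
      funext q; rw [Rtil, hL₁app, hL₂app]
    rw [← heq]; exact this
  rw [hR.fderiv]
  simp only [ContinuousLinearMap.add_apply, ContinuousLinearMap.smul_apply,
    ContinuousLinearMap.comp_apply, ContinuousLinearEquiv.coe_coe, Complex.conjCLE_apply,
    hL₁app, hL₂app, smul_eq_mul]
  ring

set_option maxHeartbeats 1000000 in
set_option maxRecDepth 8000 in
/-- **Madelung identity for pure states.**
For `ψ ∈ C¹(ℝ^d;ℂ)` nowhere vanishing with `‖ψ‖_{L²} = 1` and
`R̃(x,y) := ψ(x + ħy/2)·conj(ψ(x − ħy/2))`, one has, in the sense of distributions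
on `ℝ^d_x × ℝ^d_y`,
`∂_{y_j}∂_{y_k}R̃ = (∂_{y_j}R̃ ∂_{y_k}R̃)/R̃ + (ħ²/4)·R̃·∂_{x_j}(∂_{x_k}R̃/R̃)`
(with the second term on the right paired against a test function `φ` as
`-∫ (∂_{x_k}R̃/R̃)·(∂_{x_j}R̃·φ + R̃·∂_{x_j}φ)`, since `R̃` is only `C¹`). -/
theorem madelung_identity_pure_states {d : ℕ} (hbar : ℝ) (hhbar : 0 < hbar)
    (ψ : (Fin d → ℝ) → ℂ) (hψ : ContDiff ℝ 1 ψ) (hnz : ∀ x, ψ x ≠ 0)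
    (hnorm : ∫ x : Fin d → ℝ, ‖ψ x‖ ^ 2 = 1) :
    ∀ j k : Fin d, ∀ φ : (Fin d → ℝ) × (Fin d → ℝ) → ℂ,
      ContDiff ℝ (⊤ : ℕ∞) φ → HasCompactSupport φ →
      -(∫ p : (Fin d → ℝ) × (Fin d → ℝ), dY d k (Rtil d hbar ψ) p * dY d j φ p) =
        (∫ p : (Fin d → ℝ) × (Fin d → ℝ),
          (dY d j (Rtil d hbar ψ) p * dY d k (Rtil d hbar ψ) p / Rtil d hbar ψ p) * φ p)
        + ((hbar ^ 2 / 4 : ℝ) : ℂ) *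
          -(∫ p : (Fin d → ℝ) × (Fin d → ℝ),
            (dX d k (Rtil d hbar ψ) p / Rtil d hbar ψ p) *
              (dX d j (Rtil d hbar ψ) p * φ p + Rtil d hbar ψ p * dX d j φ p)) := by
  intro j k φ hφ hφs
  have hψd : Differentiable ℝ ψ := hψ.differentiable one_ne_zero
  have hφ1 : ContDiff ℝ 1 φ := hφ.of_le (by simp)
  have hφd : Differentiable ℝ φ := hφ1.differentiable one_ne_zero
  set R : (Fin d → ℝ) × (Fin d → ℝ) → ℂ := Rtil d hbar ψ with hRdef
  have hconjc : Continuous (fun z : ℂ => starRingEnd ℂ z) := Complex.continuous_conj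
  have hi1 : Continuous (fun p : (Fin d → ℝ) × (Fin d → ℝ) => p.1 + (hbar / 2) • p.2) :=
    by fun_prop
  have hi2 : Continuous (fun p : (Fin d → ℝ) × (Fin d → ℝ) => p.1 - (hbar / 2) • p.2) :=
    by fun_prop
  have hRc : ContDiff ℝ 1 R := by
    rw [hRdef]
    have h1 : ContDiff ℝ 1 (fun p : (Fin d → ℝ) × (Fin d → ℝ) =>
        ψ (p.1 + (hbar / 2) • p.2)) :=
      hψ.comp (contDiff_fst.add (contDiff_snd.const_smul _))
    have h2 : ContDiff ℝ 1 (fun p : (Fin d → ℝ) × (Fin d → ℝ) =>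
        starRingEnd ℂ (ψ (p.1 - (hbar / 2) • p.2))) := by
      have hc : ContDiff ℝ 1 (fun z : ℂ => starRingEnd ℂ z) :=
        Complex.conjCLE.toContinuousLinearMap.contDiff
      exact hc.comp (hψ.comp (contDiff_fst.sub (contDiff_snd.const_smul _)))
    exact h1.mul h2
  have hRd : Differentiable ℝ R := hRc.differentiable one_ne_zero
  have hRnz : ∀ p, R p ≠ 0 := by
    intro p
    rw [hRdef]
    exact mul_ne_zero (hnz _) (star_ne_zero.mpr (hnz _))
  have hRcont : Continuous R := hRc.continuous
  set Φ : (Fin d → ℝ) × (Fin d → ℝ) → ℂ := fun p => R p * φ p with hΦdef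
  have hΦc : ContDiff ℝ 1 Φ := hRc.mul hφ1
  have hΦs : HasCompactSupport Φ := hφs.mul_left
  set g₁ : (Fin d → ℝ) × (Fin d → ℝ) → ℂ := fun p =>
    fderiv ℝ ψ (p.1 + (hbar / 2) • p.2) (Pi.single k 1) / ψ (p.1 + (hbar / 2) • p.2) with hg₁def
  set g₂ : (Fin d → ℝ) × (Fin d → ℝ) → ℂ := fun p =>
    starRingEnd ℂ (fderiv ℝ ψ (p.1 - (hbar / 2) • p.2) (Pi.single k 1)) /
      starRingEnd ℂ (ψ (p.1 - (hbar / 2) • p.2)) with hg₂def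
  have hg₁c : Continuous g₁ := by
    rw [hg₁def]
    exact (((ContinuousLinearMap.apply ℝ ℂ (Pi.single k 1)).continuous.comp
      ((hψ.continuous_fderiv one_ne_zero).comp hi1))).div (hψ.continuous.comp hi1)
      (fun p => hnz _)
  have hg₂c : Continuous g₂ := by
    rw [hg₂def]
    refine Continuous.div ?_ ?_ ?_
    · exact hconjc.comp (((ContinuousLinearMap.apply ℝ ℂ (Pi.single k 1)).continuous.comp
        ((hψ.continuous_fderiv one_ne_zero).comp hi2)))
    · exact hconjc.comp (hψ.continuous.comp hi2)
    · exact fun p => star_ne_zero.mpr (hnz _)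
  -- nonvanishing of the conjugate factor
  have hb2 : ∀ X : Fin d → ℝ, starRingEnd ℂ (ψ X) ≠ 0 := fun X =>
    star_ne_zero.mpr (hnz X)
  -- formulas for the logarithmic derivatives
  have hvk : ∀ p, dY d k R p =
      R p * ((((hbar / 2 : ℝ)) : ℂ) * g₁ p - (((hbar / 2 : ℝ)) : ℂ) * g₂ p) := by
    intro p
    have h := fderiv_Rtil hbar ψ hψ p (0, Pi.single k 1)
    simp only [dY, hRdef]
    rw [h]
    simp only [hg₁def, hg₂def, Rtil, zero_add, zero_sub, map_neg, _root_.map_smul,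
      Complex.real_smul, map_mul, Complex.conj_ofReal]
    have ha := hnz (p.1 + (hbar / 2) • p.2)
    have hb := hb2 (p.1 - (hbar / 2) • p.2)
    field_simp
    ring
  have hwk : ∀ p, dX d k R p = R p * (g₁ p + g₂ p) := by
    intro p
    have h := fderiv_Rtil hbar ψ hψ p (Pi.single k 1, 0)
    simp only [dX, hRdef]
    rw [h]
    simp only [hg₁def, hg₂def, Rtil, add_zero, sub_zero, smul_zero]
    have ha := hnz (p.1 + (hbar / 2) • p.2)
    have hb := hb2 (p.1 - (hbar / 2) • p.2)
    field_simp
  have hvkdiv : ∀ p, dY d k R p / R p =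
      (((hbar / 2 : ℝ)) : ℂ) * g₁ p - (((hbar / 2 : ℝ)) : ℂ) * g₂ p := by
    intro p; rw [hvk p, mul_div_cancel_left₀ _ (hRnz p)]
  have hwkdiv : ∀ p, dX d k R p / R p = g₁ p + g₂ p := by
    intro p; rw [hwk p, mul_div_cancel_left₀ _ (hRnz p)]
  -- product rules for Φ = R * φ
  have hdyΦ : ∀ p, fderiv ℝ Φ p (0, Pi.single j 1) =
      dY d j R p * φ p + R p * dY d j φ p := by
    intro p
    have h := ((hRd p).hasFDerivAt.mul (hφd p).hasFDerivAt).fderiv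
    rw [hΦdef, show (fun p => R p * φ p) = R * φ from rfl, h]
    simp only [ContinuousLinearMap.add_apply, ContinuousLinearMap.smul_apply, smul_eq_mul, dY]
    ring
  have hdxΦ : ∀ p, fderiv ℝ Φ p (Pi.single j 1, 0) =
      dX d j R p * φ p + R p * dX d j φ p := by
    intro p
    have h := ((hRd p).hasFDerivAt.mul (hφd p).hasFDerivAt).fderiv
    rw [hΦdef, show (fun p => R p * φ p) = R * φ from rfl, h]
    simp only [ContinuousLinearMap.add_apply, ContinuousLinearMap.smul_apply, smul_eq_mul, dX]
    ring
  -- the two invariance directions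
  set v₁ : (Fin d → ℝ) × (Fin d → ℝ) :=
    ((hbar / 2) • (Pi.single j 1 : Fin d → ℝ), -(Pi.single j 1 : Fin d → ℝ)) with hv₁def
  set v₂ : (Fin d → ℝ) × (Fin d → ℝ) :=
    ((hbar / 2) • (Pi.single j 1 : Fin d → ℝ), (Pi.single j 1 : Fin d → ℝ)) with hv₂def
  have hinv₁ : ∀ p (t : ℝ), g₁ (p + t • v₁) = g₁ p := by
    intro p t
    have harg : (p + t • v₁).1 + (hbar / 2) • (p + t • v₁).2 = p.1 + (hbar / 2) • p.2 := by
      rw [hv₁def]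
      simp only [Prod.smul_mk, Prod.fst_add, Prod.snd_add]
      module
    simp only [hg₁def]
    rw [harg]
  have hinv₂ : ∀ p (t : ℝ), g₂ (p + t • v₂) = g₂ p := by
    intro p t
    have harg : (p + t • v₂).1 - (hbar / 2) • (p + t • v₂).2 = p.1 - (hbar / 2) • p.2 := by
      rw [hv₂def]
      simp only [Prod.smul_mk, Prod.fst_add, Prod.snd_add]
      module
    simp only [hg₂def]
    rw [harg]
  -- the two vanishing integrals
  have hz₁ : ∫ p : (Fin d → ℝ) × (Fin d → ℝ), g₁ p * fderiv ℝ Φ p v₁ = 0 :=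
    key_zero g₁ hg₁c v₁ hinv₁ Φ hΦc hΦs
  have hz₂ : ∫ p : (Fin d → ℝ) × (Fin d → ℝ), g₂ p * fderiv ℝ Φ p v₂ = 0 :=
    key_zero g₂ hg₂c v₂ hinv₂ Φ hΦc hΦs
  -- expansion of fderiv Φ in the invariance directions
  have hv₁e : ∀ p, fderiv ℝ Φ p v₁ =
      (((hbar / 2 : ℝ)) : ℂ) * fderiv ℝ Φ p (Pi.single j 1, 0) -
        fderiv ℝ Φ p (0, Pi.single j 1) := by
    intro p
    have hveq : v₁ = (hbar / 2) • ((Pi.single j 1, 0) : (Fin d → ℝ) × (Fin d → ℝ)) -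
        ((0, Pi.single j 1) : (Fin d → ℝ) × (Fin d → ℝ)) := by
      rw [hv₁def]
      simp [Prod.ext_iff]
    rw [hveq, map_sub, _root_.map_smul, Complex.real_smul]
  have hv₂e : ∀ p, fderiv ℝ Φ p v₂ =
      (((hbar / 2 : ℝ)) : ℂ) * fderiv ℝ Φ p (Pi.single j 1, 0) +
        fderiv ℝ Φ p (0, Pi.single j 1) := by
    intro p
    have hveq : v₂ = (hbar / 2) • ((Pi.single j 1, 0) : (Fin d → ℝ) × (Fin d → ℝ)) +
        ((0, Pi.single j 1) : (Fin d → ℝ) × (Fin d → ℝ)) := by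
      rw [hv₂def]
      simp [Prod.ext_iff]
    rw [hveq, map_add, _root_.map_smul, Complex.real_smul]
  -- continuity of derivative evaluations
  have hevalR : ∀ v, Continuous (fun p => fderiv ℝ R p v) := fun v =>
    (ContinuousLinearMap.apply ℝ ℂ v).continuous.comp (hRc.continuous_fderiv one_ne_zero)
  have hevalΦ : ∀ v, Continuous (fun p => fderiv ℝ Φ p v) := fun v =>
    (ContinuousLinearMap.apply ℝ ℂ v).continuous.comp (hΦc.continuous_fderiv one_ne_zero)
  -- integrability facts
  have hT1int : Integrable (fun p => (dY d k R p / R p) * fderiv ℝ Φ p (0, Pi.single j 1)) :=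
    (((hevalR (0, Pi.single k 1)).div hRcont hRnz).mul (hevalΦ _)).integrable_of_hasCompactSupport
      (hΦs.fderiv_apply ℝ _).mul_left
  have hqint : Integrable (fun p => (dY d j R p * φ p) * (dY d k R p / R p)) :=
    (((hevalR (0, Pi.single j 1)).mul hφ1.continuous).mul
      ((hevalR (0, Pi.single k 1)).div hRcont hRnz)).integrable_of_hasCompactSupport
      (hφs.mul_left.mul_right)
  have hT2int : Integrable (fun p => (dX d k R p / R p) * fderiv ℝ Φ p (Pi.single j 1, 0)) :=
    (((hevalR (Pi.single k 1, 0)).div hRcont hRnz).mul (hevalΦ _)).integrable_of_hasCompactSupport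
      (hΦs.fderiv_apply ℝ _).mul_left
  have hz₁int : Integrable (fun p => g₁ p * fderiv ℝ Φ p v₁) :=
    (hg₁c.mul (hevalΦ _)).integrable_of_hasCompactSupport (hΦs.fderiv_apply ℝ _).mul_left
  have hz₂int : Integrable (fun p => g₂ p * fderiv ℝ Φ p v₂) :=
    (hg₂c.mul (hevalΦ _)).integrable_of_hasCompactSupport (hΦs.fderiv_apply ℝ _).mul_left
  -- Step 1: rewrite the left-hand side
  have hI1 : ∫ p : (Fin d → ℝ) × (Fin d → ℝ), dY d k R p * dY d j φ p =
      (∫ p : (Fin d → ℝ) × (Fin d → ℝ), (dY d k R p / R p) * fderiv ℝ Φ p (0, Pi.single j 1)) -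
        ∫ p : (Fin d → ℝ) × (Fin d → ℝ), (dY d j R p * φ p) * (dY d k R p / R p) := by
    rw [← integral_sub hT1int hqint]
    congr 1
    funext p
    rw [hdyΦ p]
    field_simp [hRnz p]
    ring
  -- Step 2: rewrite the first term on the right-hand side
  have hI2 : ∫ p : (Fin d → ℝ) × (Fin d → ℝ), dY d j R p * dY d k R p / R p * φ p =
      ∫ p : (Fin d → ℝ) × (Fin d → ℝ), (dY d j R p * φ p) * (dY d k R p / R p) := by
    congr 1
    funext p
    ring
  -- Step 3: rewrite the second term on the right-hand side
  have hI3 : ∫ p : (Fin d → ℝ) × (Fin d → ℝ),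
      (dX d k R p / R p) * (dX d j R p * φ p + R p * dX d j φ p) =
      ∫ p : (Fin d → ℝ) × (Fin d → ℝ), (dX d k R p / R p) * fderiv ℝ Φ p (Pi.single j 1, 0) := by
    congr 1
    funext p
    rw [hdxΦ p]
  -- Step 4: the key identity
  have hstar : ∫ p : (Fin d → ℝ) × (Fin d → ℝ),
      (dY d k R p / R p) * fderiv ℝ Φ p (0, Pi.single j 1) =
      (((hbar / 2 : ℝ)) : ℂ) ^ 2 *
        ∫ p : (Fin d → ℝ) × (Fin d → ℝ), (dX d k R p / R p) * fderiv ℝ Φ p (Pi.single j 1, 0) := by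
    have hpt : ∀ p, (dY d k R p / R p) * fderiv ℝ Φ p (0, Pi.single j 1) =
        (((hbar / 2 : ℝ)) : ℂ) ^ 2 *
          ((dX d k R p / R p) * fderiv ℝ Φ p (Pi.single j 1, 0)) +
        ((-(((hbar / 2 : ℝ)) : ℂ)) * (g₁ p * fderiv ℝ Φ p v₁) +
          (-(((hbar / 2 : ℝ)) : ℂ)) * (g₂ p * fderiv ℝ Φ p v₂)) := by
      intro p
      rw [hvkdiv p, hwkdiv p, hv₁e p, hv₂e p]
      ring
    rw [show (fun p : (Fin d → ℝ) × (Fin d → ℝ) =>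
        (dY d k R p / R p) * fderiv ℝ Φ p (0, Pi.single j 1)) = fun p =>
        (((hbar / 2 : ℝ)) : ℂ) ^ 2 *
          ((dX d k R p / R p) * fderiv ℝ Φ p (Pi.single j 1, 0)) +
        ((-(((hbar / 2 : ℝ)) : ℂ)) * (g₁ p * fderiv ℝ Φ p v₁) +
          (-(((hbar / 2 : ℝ)) : ℂ)) * (g₂ p * fderiv ℝ Φ p v₂)) from funext hpt]
    have hA : Integrable (fun p => (((hbar / 2 : ℝ)) : ℂ) ^ 2 *
        ((dX d k R p / R p) * fderiv ℝ Φ p (Pi.single j 1, 0))) volume :=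
      hT2int.const_mul _
    have hB : Integrable (fun p => (-(((hbar / 2 : ℝ)) : ℂ)) * (g₁ p * fderiv ℝ Φ p v₁) +
        (-(((hbar / 2 : ℝ)) : ℂ)) * (g₂ p * fderiv ℝ Φ p v₂)) volume :=
      (hz₁int.const_mul _).add (hz₂int.const_mul _)
    rw [integral_add hA hB,
      integral_add (hz₁int.const_mul _) (hz₂int.const_mul _),
      integral_const_mul, integral_const_mul, integral_const_mul, hz₁, hz₂]
    ring
  have hcast : ((hbar ^ 2 / 4 : ℝ) : ℂ) = (((hbar / 2 : ℝ)) : ℂ) ^ 2 := by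
    push_cast
    ring
  rw [hI1, hI2, hI3, hstar, hcast]
  ring

end
end

section
/- (Quantum hydrodynamics: the Madelung–Euler equation) Let ħ > 0, m > 0, let V : ℝ^d → ℝ be smooth, and let ψ ∈ C^∞(ℝ_t × ℝ^d; ℂ) solve the Schrödinger equation iħ ∂_t ψ = −(ħ²/2m)Δ_x ψ + V ψ, with ψ(t,x) ≠ 0 for all (t,x). Define ρ := |ψ|² > 0, J := (ħ/m)·Im(conj(ψ)∇_x ψ), and u := J/ρ. Then for each k = 1, …, d: ∂_t(ρ u_k) + Σ_{j=1}^d ∂_{x_j}(ρ u_j u_k) = (ħ²/(4m²))·Σ_{j=1}^d ∂_{x_j}( ρ ∂_{x_j}∂_{x_k} ln ρ ) − (1/m)·ρ ∂_{x_k} V on ℝ_t × ℝ^d. -/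
open MeasureTheory Real Complex Filter Topology ENNReal

noncomputable section

/-- Time derivative of a function on `ℝ_t × ℝ^d_x`. -/
def dT {d : ℕ} {F : Type*} [NormedAddCommGroup F] [NormedSpace ℝ F]
    (f : ℝ × (Fin d → ℝ) → F) (p : ℝ × (Fin d → ℝ)) : F :=
  fderiv ℝ f p ((1 : ℝ), 0)

/-- Spatial partial derivative `∂_{x_j}` of a function on `ℝ_t × ℝ^d_x`. -/
def dXj {d : ℕ} {F : Type*} [NormedAddCommGroup F] [NormedSpace ℝ F]
    (j : Fin d) (f : ℝ × (Fin d → ℝ) → F) (p : ℝ × (Fin d → ℝ)) : F :=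
  fderiv ℝ f p (0, Pi.single j (1 : ℝ))

/-- The particle density `ρ = |ψ|²`. -/
def rhoF {d : ℕ} (ψ : ℝ × (Fin d → ℝ) → ℂ) (p : ℝ × (Fin d → ℝ)) : ℝ :=
  Complex.normSq (ψ p)

/-- The current density `J = (ħ/m) Im(conj(ψ) ∇_x ψ)`. -/
def JF {d : ℕ} (hbar m : ℝ) (ψ : ℝ × (Fin d → ℝ) → ℂ) (k : Fin d)
    (p : ℝ × (Fin d → ℝ)) : ℝ :=
  (hbar / m) * (starRingEnd ℂ (ψ p) * dXj k ψ p).im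

/-- The velocity field `u = J/ρ`. -/
def uF {d : ℕ} (hbar m : ℝ) (ψ : ℝ × (Fin d → ℝ) → ℂ) (k : Fin d)
    (p : ℝ × (Fin d → ℝ)) : ℝ :=
  JF hbar m ψ k p / rhoF ψ p


variable {d : ℕ} {F G : Type*} [NormedAddCommGroup F] [NormedSpace ℝ F]
  [NormedAddCommGroup G] [NormedSpace ℝ G]

abbrev EE (d : ℕ) := ℝ × (Fin d → ℝ)

def Dv (v : EE d) (f : EE d → F) : EE d → F := fun q => fderiv ℝ f q v

lemma infle : (⊤ : ℕ∞) + 1 ≤ ((⊤ : ℕ∞) : WithTop ℕ∞) := by norm_num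
lemma onele : (1 : WithTop ℕ∞) ≤ ((⊤ : ℕ∞) : WithTop ℕ∞) := by norm_num
lemma twole : (2 : WithTop ℕ∞) ≤ ((⊤ : ℕ∞) : WithTop ℕ∞) := by
  rw [show ((2:WithTop ℕ∞)) = ((2:ℕ∞) : WithTop ℕ∞) from rfl]
  exact_mod_cast le_top

lemma ContDiff.dv {f : EE d → F} (hf : ContDiff ℝ (⊤ : ℕ∞) f) (v : EE d) :
    ContDiff ℝ (⊤ : ℕ∞) (Dv v f) :=
  (ContinuousLinearMap.apply ℝ F v).contDiff.comp (hf.fderiv_right infle)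

lemma ContDiff.dvdiff {f : EE d → F} (hf : ContDiff ℝ (⊤ : ℕ∞) f) {q : EE d} :
    DifferentiableAt ℝ f q := (hf.differentiable (by simp)).differentiableAt

lemma Dv_comm {f : EE d → F} (hf : ContDiff ℝ (⊤ : ℕ∞) f) (v w : EE d) :
    Dv v (Dv w f) = Dv w (Dv v f) := by
  funext q
  have hd : DifferentiableAt ℝ (fderiv ℝ f) q :=
    ((hf.fderiv_right infle).differentiable (by simp)).differentiableAt
  have h1 : ∀ u : EE d, Dv u f = fun x => ContinuousLinearMap.apply ℝ F u (fderiv ℝ f x) :=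
    fun u => rfl
  have key : ∀ u u' : EE d, Dv u (Dv u' f) q = fderiv ℝ (fderiv ℝ f) q u u' := by
    intro u u'
    rw [h1 u']
    show fderiv ℝ ((ContinuousLinearMap.apply ℝ F u') ∘ (fderiv ℝ f)) q u = _
    rw [fderiv_comp q (ContinuousLinearMap.apply ℝ F u').differentiableAt hd]
    simp
  rw [key, key]
  exact (hf.contDiffAt.isSymmSndFDerivAt (by simpa using twole)) v w

variable {v : EE d} {q : EE d}

lemma Dv_clm (g : F →L[ℝ] G) {f : EE d → F} (hf : DifferentiableAt ℝ f q) :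
    Dv v (fun x => g (f x)) q = g (Dv v f q) := by
  show fderiv ℝ (g ∘ f) q v = _
  rw [fderiv_comp q g.differentiableAt hf, g.fderiv]
  rfl

lemma Dv_conj {f : EE d → ℂ} (hf : DifferentiableAt ℝ f q) :
    Dv v (fun x => (starRingEnd ℂ) (f x)) q = (starRingEnd ℂ) (Dv v f q) :=
  Dv_clm (Complex.conjCLE : ℂ ≃L[ℝ] ℂ).toContinuousLinearMap hf

lemma Dv_re {f : EE d → ℂ} (hf : DifferentiableAt ℝ f q) :
    Dv v (fun x => (f x).re) q = (Dv v f q).re :=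
  Dv_clm Complex.reCLM hf

lemma Dv_im {f : EE d → ℂ} (hf : DifferentiableAt ℝ f q) :
    Dv v (fun x => (f x).im) q = (Dv v f q).im :=
  Dv_clm Complex.imCLM hf

lemma Dv_ofReal {f : EE d → ℝ} (hf : DifferentiableAt ℝ f q) :
    Dv v (fun x => ((f x : ℝ) : ℂ)) q = ((Dv v f q : ℝ) : ℂ) :=
  Dv_clm Complex.ofRealCLM hf

lemma Dv_mul {𝔸 : Type*} [NormedRing 𝔸] [NormedAlgebra ℝ 𝔸] {f g : EE d → 𝔸}
    (hf : DifferentiableAt ℝ f q) (hg : DifferentiableAt ℝ g q) :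
    Dv v (fun x => f x * g x) q = f q * Dv v g q + Dv v f q * g q := by
  show fderiv ℝ (fun x => f x * g x) q v = _
  rw [fderiv_fun_mul' hf hg]
  simp [Dv]

lemma Dv_const_mul {𝔸 : Type*} [NormedRing 𝔸] [NormedAlgebra ℝ 𝔸] {f : EE d → 𝔸}
    (hf : DifferentiableAt ℝ f q) (c : 𝔸) :
    Dv v (fun x => c * f x) q = c * Dv v f q := by
  show fderiv ℝ (fun x => c * f x) q v = _
  rw [fderiv_const_mul hf c]
  rfl

lemma Dv_add {f g : EE d → F} (hf : DifferentiableAt ℝ f q) (hg : DifferentiableAt ℝ g q) :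
    Dv v (fun x => f x + g x) q = Dv v f q + Dv v g q := by
  show fderiv ℝ (fun x => f x + g x) q v = _
  rw [fderiv_fun_add hf hg]; rfl

lemma Dv_sub {f g : EE d → F} (hf : DifferentiableAt ℝ f q) (hg : DifferentiableAt ℝ g q) :
    Dv v (fun x => f x - g x) q = Dv v f q - Dv v g q := by
  show fderiv ℝ (fun x => f x - g x) q v = _
  rw [fderiv_fun_sub hf hg]; rfl

lemma Dv_sum {ι : Type*} (s : Finset ι) {f : ι → EE d → F}
    (hf : ∀ i ∈ s, DifferentiableAt ℝ (f i) q) :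
    Dv v (fun x => ∑ i ∈ s, f i x) q = ∑ i ∈ s, Dv v (f i) q := by
  show fderiv ℝ (fun x => ∑ i ∈ s, f i x) q v = _
  rw [fderiv_fun_sum hf]
  simp [Dv]

lemma Dv_inv {f : EE d → ℝ} (hf : DifferentiableAt ℝ f q) (hne : f q ≠ 0) :
    Dv v (fun x => (f x)⁻¹) q = -Dv v f q / f q ^ 2 := by
  have h := (hasDerivAt_inv hne).comp_hasFDerivAt q hf.hasFDerivAt
  rw [show (fun x => (f x)⁻¹) = (fun y : ℝ => y⁻¹) ∘ f from rfl, Dv, h.fderiv]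
  simp [Dv, div_eq_mul_inv]
  ring

lemma DiffAt_inv {f : EE d → ℝ} (hf : DifferentiableAt ℝ f q) (hne : f q ≠ 0) :
    DifferentiableAt ℝ (fun x => (f x)⁻¹) q :=
  ((hasDerivAt_inv hne).comp_hasFDerivAt q hf.hasFDerivAt).differentiableAt

lemma Dv_log {f : EE d → ℝ} (hf : DifferentiableAt ℝ f q) (hne : f q ≠ 0) :
    Dv v (fun x => Real.log (f x)) q = Dv v f q / f q := by
  have h := hf.hasFDerivAt.log hne
  rw [Dv, h.fderiv]
  simp [Dv, div_eq_mul_inv, mul_comm]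

lemma Dv_snd (W : (Fin d → ℝ) → ℝ) (hW : Differentiable ℝ W) :
    Dv v (fun x : EE d => W x.2) q = fderiv ℝ W q.2 v.2 := by
  show fderiv ℝ (W ∘ Prod.snd) q v = _
  rw [fderiv_comp q (hW q.2) (differentiable_snd q)]
  simp [fderiv_snd]

/- ### Smoothness combinators -/
lemma ContDiff.conj' {f : EE d → ℂ} (hf : ContDiff ℝ (⊤:ℕ∞) f) :
    ContDiff ℝ (⊤:ℕ∞) (fun x => (starRingEnd ℂ) (f x)) :=
  (Complex.conjCLE : ℂ ≃L[ℝ] ℂ).toContinuousLinearMap.contDiff.comp hf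

lemma ContDiff.re' {f : EE d → ℂ} (hf : ContDiff ℝ (⊤:ℕ∞) f) :
    ContDiff ℝ (⊤:ℕ∞) (fun x => (f x).re) := Complex.reCLM.contDiff.comp hf

lemma ContDiff.im' {f : EE d → ℂ} (hf : ContDiff ℝ (⊤:ℕ∞) f) :
    ContDiff ℝ (⊤:ℕ∞) (fun x => (f x).im) := Complex.imCLM.contDiff.comp hf

lemma ContDiff.ofReal' {f : EE d → ℝ} (hf : ContDiff ℝ (⊤:ℕ∞) f) :
    ContDiff ℝ (⊤:ℕ∞) (fun x => ((f x : ℝ):ℂ)) := Complex.ofRealCLM.contDiff.comp hf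

/- directions -/
def ee {d : ℕ} (j : Fin d) : EE d := ((0:ℝ), Pi.single j (1:ℝ))
def et {d : ℕ} : EE d := ((1:ℝ), (0 : Fin d → ℝ))

lemma dT_eq {f : EE d → F} : dT f = Dv et f := rfl
lemma dXj_eq {j : Fin d} {f : EE d → F} : dXj j f = Dv (ee j) f := rfl

section PSI
variable {ψ : EE d → ℂ} (hψ : ContDiff ℝ (⊤:ℕ∞) ψ)

lemma rhoF_eq : rhoF ψ = fun q => ((starRingEnd ℂ) (ψ q) * ψ q).re := by
  funext q; simp [rhoF, Complex.normSq_apply, Complex.mul_re]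

include hψ in
lemma rhoF_smooth : ContDiff ℝ (⊤:ℕ∞) (rhoF ψ) := by
  rw [rhoF_eq]; exact (hψ.conj'.mul hψ).re'

include hψ in
lemma Dv_rho (v : EE d) (q : EE d) :
    Dv v (rhoF ψ) q = 2 * ((starRingEnd ℂ) (ψ q) * Dv v ψ q).re := by
  rw [rhoF_eq]
  rw [Dv_re (hψ.conj'.mul hψ).dvdiff, Dv_mul hψ.conj'.dvdiff hψ.dvdiff,
    Dv_conj hψ.dvdiff]
  simp [Complex.mul_re]
  ring


/-- The quantum stress auxiliary function. -/
def Gf (hbar m : ℝ) (ψ : EE d → ℂ) (j k : Fin d) : EE d → ℝ := fun q =>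
  (hbar ^ 2 / (2 * m ^ 2)) *
    ((starRingEnd ℂ) (ψ q) * Dv (ee j) (Dv (ee k) ψ) q
      - (starRingEnd ℂ) (Dv (ee j) ψ q) * Dv (ee k) ψ q).re

include hψ in
lemma Gf_smooth (hbar m : ℝ) (j k : Fin d) : ContDiff ℝ (⊤:ℕ∞) (Gf hbar m ψ j k) := by
  unfold Gf
  exact contDiff_const.mul
    ((hψ.conj'.mul ((hψ.dv (ee k)).dv (ee j))).sub
      ((hψ.dv (ee j)).conj'.mul (hψ.dv (ee k)))).re'


include hψ in
lemma lemA (hbar m : ℝ) (hm : m ≠ 0) (hnz : ∀ q, ψ q ≠ 0) (j k : Fin d) :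
    (fun q => rhoF ψ q * uF hbar m ψ j q * uF hbar m ψ k q)
      = fun q => (hbar ^ 2 / (4 * m ^ 2)) *
          (rhoF ψ q * Dv (ee j) (Dv (ee k) (fun z => Real.log (rhoF ψ z))) q)
          - Gf hbar m ψ j k q := by
  have hρ := rhoF_smooth hψ
  have hρne : ∀ z, rhoF ψ z ≠ 0 := fun z => (Complex.normSq_pos.mpr (hnz z)).ne'
  funext q
  have hlog : (fun z => Real.log (rhoF ψ z))
      = fun z => Real.log (rhoF ψ z) := rfl
  have h1 : Dv (ee k) (fun z => Real.log (rhoF ψ z))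
      = fun z => Dv (ee k) (rhoF ψ) z * (rhoF ψ z)⁻¹ := by
    funext z
    rw [Dv_log hρ.dvdiff (hρne z), div_eq_mul_inv]
  have hN : Dv (ee k) (rhoF ψ)
      = fun z => 2 * ((starRingEnd ℂ) (ψ z) * Dv (ee k) ψ z).re := by
    funext z; exact Dv_rho hψ _ _
  rw [h1]
  rw [Dv_mul (by rw [hN]; exact (contDiff_const.mul ((hψ.conj'.mul (hψ.dv (ee k))).re')).dvdiff)
      (DiffAt_inv hρ.dvdiff (hρne q)),
    Dv_inv hρ.dvdiff (hρne q)]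
  rw [show Dv (ee j) (Dv (ee k) (rhoF ψ)) q
      = 2 * ((starRingEnd ℂ) (ψ q) * Dv (ee j) (Dv (ee k) ψ) q
          + (starRingEnd ℂ) (Dv (ee j) ψ q) * Dv (ee k) ψ q).re by
    rw [hN]
    rw [Dv_const_mul ((hψ.conj'.mul (hψ.dv (ee k))).re').dvdiff]
    rw [Dv_re (hψ.conj'.mul (hψ.dv (ee k))).dvdiff]
    rw [Dv_mul hψ.conj'.dvdiff (hψ.dv (ee k)).dvdiff]
    rw [Dv_conj hψ.dvdiff]]
  rw [Dv_rho hψ (ee j) q, Dv_rho hψ (ee k) q]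
  unfold uF JF Gf rhoF
  rw [show dXj j ψ q = Dv (ee j) ψ q from rfl, show dXj k ψ q = Dv (ee k) ψ q from rfl]
  have hne' : Complex.normSq (ψ q) ≠ 0 := hρne q
  set a := ψ q
  set b := Dv (ee j) ψ q
  set c := Dv (ee k) ψ q
  set e2 := Dv (ee j) (Dv (ee k) ψ) q
  simp only [Complex.mul_re, Complex.mul_im, Complex.conj_re, Complex.conj_im,
    Complex.sub_re, Complex.add_re, Complex.normSq_apply]
  have h0 : a.re * a.re + a.im * a.im ≠ 0 := by
    simpa [Complex.normSq_apply] using hne'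
  have h0' : a.re ^ 2 + a.im ^ 2 ≠ 0 := by simpa [sq] using h0
  field_simp
  ring


include hψ in
lemma rho_u (hbar m : ℝ) (hnz : ∀ q, ψ q ≠ 0) (k : Fin d) :
    (fun q => rhoF ψ q * uF hbar m ψ k q) = JF hbar m ψ k := by
  funext q
  have hρne : rhoF ψ q ≠ 0 := (Complex.normSq_pos.mpr (hnz q)).ne'
  unfold uF
  field_simp

include hψ in
lemma lemB {V : (Fin d → ℝ) → ℝ} (hbar m : ℝ) (hh : hbar ≠ 0) (hm : m ≠ 0)
    (hV : ContDiff ℝ (⊤:ℕ∞) V)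
    (hSch : ∀ q : EE d, Complex.I * (hbar : ℂ) * dT ψ q =
        -(((hbar ^ 2 / (2 * m) : ℝ)) : ℂ) * (∑ j, dXj j (dXj j ψ) q)
          + (V q.2 : ℂ) * ψ q)
    (p : EE d) (k : Fin d) :
    dT (JF hbar m ψ k) p = ∑ j, Dv (ee j) (Gf hbar m ψ j k) p
      - (1 / m) * rhoF ψ p * fderiv ℝ V p.2 (Pi.single k (1 : ℝ)) := by
  have hIh : (Complex.I * (hbar : ℂ)) ≠ 0 :=
    mul_ne_zero Complex.I_ne_zero (by exact_mod_cast hh)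
  set S : EE d → ℂ := fun q => ∑ j, Dv (ee j) (Dv (ee j) ψ) q with hSdef
  have hSsm : ContDiff ℝ (⊤:ℕ∞) S :=
    ContDiff.sum fun j _ => (hψ.dv (ee j)).dv (ee j)
  have hVc : ContDiff ℝ (⊤:ℕ∞) (fun q : EE d => ((V q.2 : ℝ) : ℂ)) :=
    (hV.comp contDiff_snd).ofReal'
  have hW : ContDiff ℝ (⊤:ℕ∞) (fun q : EE d =>
      -(((hbar ^ 2 / (2 * m) : ℝ)) : ℂ) * S q + ((V q.2 : ℝ) : ℂ) * ψ q) :=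
    (contDiff_const.mul hSsm).add (hVc.mul hψ)
  -- Solve Schrödinger for dT ψ as a function identity
  have hdt : dT ψ = fun q => (Complex.I * (hbar : ℂ))⁻¹ *
      (-(((hbar ^ 2 / (2 * m) : ℝ)) : ℂ) * S q + ((V q.2 : ℝ) : ℂ) * ψ q) := by
    funext q
    apply mul_left_cancel₀ hIh
    rw [← mul_assoc, mul_inv_cancel₀ hIh, one_mul]
    exact hSch q
  -- compute dT (JF k) p
  have hin : ContDiff ℝ (⊤:ℕ∞)
      (fun q => ((starRingEnd ℂ) (ψ q) * Dv (ee k) ψ q).im) :=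
    (hψ.conj'.mul (hψ.dv (ee k))).im'
  have e1 : dT (JF hbar m ψ k) p
      = (hbar / m) * ((starRingEnd ℂ) (ψ p) * Dv et (Dv (ee k) ψ) p
          + (starRingEnd ℂ) (Dv et ψ p) * Dv (ee k) ψ p).im := by
    show Dv et (fun q => (hbar / m) *
      ((starRingEnd ℂ) (ψ q) * Dv (ee k) ψ q).im) p = _
    rw [Dv_const_mul hin.dvdiff, Dv_im (hψ.conj'.mul (hψ.dv (ee k))).dvdiff,
      Dv_mul hψ.conj'.dvdiff (hψ.dv (ee k)).dvdiff, Dv_conj hψ.dvdiff]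
  have hcomm : Dv et (Dv (ee k) ψ) = Dv (ee k) (dT ψ) := Dv_comm hψ et (ee k)
  have e2 : Dv (ee k) (dT ψ) p = (Complex.I * (hbar : ℂ))⁻¹ *
      (-(((hbar ^ 2 / (2 * m) : ℝ)) : ℂ) * (∑ j, Dv (ee j) (Dv (ee j) (Dv (ee k) ψ)) p)
        + (((fderiv ℝ V p.2 (Pi.single k (1:ℝ)) : ℝ) : ℂ) * ψ p
          + ((V p.2 : ℝ) : ℂ) * Dv (ee k) ψ p)) := by
    rw [hdt]
    rw [show (fun q => (Complex.I * (hbar : ℂ))⁻¹ *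
        (-(((hbar ^ 2 / (2 * m) : ℝ)) : ℂ) * S q + ((V q.2 : ℝ) : ℂ) * ψ q)) =
      (fun q => (Complex.I * (hbar : ℂ))⁻¹ *
        ((fun q => -(((hbar ^ 2 / (2 * m) : ℝ)) : ℂ) * S q) q
          + (fun q => ((V q.2 : ℝ) : ℂ) * ψ q) q)) from rfl]
    rw [Dv_const_mul hW.dvdiff]
    rw [Dv_add (contDiff_const.mul hSsm).dvdiff (hVc.mul hψ).dvdiff]
    rw [Dv_const_mul hSsm.dvdiff]
    rw [Dv_mul hVc.dvdiff hψ.dvdiff]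
    have hDS : Dv (ee k) S p = ∑ j, Dv (ee j) (Dv (ee j) (Dv (ee k) ψ)) p := by
      rw [hSdef]
      rw [Dv_sum Finset.univ (fun j _ => ((hψ.dv (ee j)).dv (ee j)).dvdiff)]
      congr 1
      funext j
      rw [Dv_comm (hψ.dv (ee j)) (ee k) (ee j), Dv_comm hψ (ee k) (ee j)]
    have hVsnd : DifferentiableAt ℝ (fun q : EE d => V q.2) p :=
      (hV.comp contDiff_snd).dvdiff
    have hDV : Dv (ee k) (fun q : EE d => ((V q.2 : ℝ) : ℂ)) p
        = ((fderiv ℝ V p.2 (Pi.single k (1:ℝ)) : ℝ) : ℂ) := by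
      rw [Dv_ofReal (f := fun q : EE d => V q.2) hVsnd,
        Dv_snd V (hV.differentiable (by simp))]
      rfl
    rw [hDS, hDV]
    ring
  have e3 : ∀ j : Fin d, Dv (ee j) (Gf hbar m ψ j k) p
      = (hbar ^ 2 / (2 * m ^ 2)) *
        ((starRingEnd ℂ) (ψ p) * Dv (ee j) (Dv (ee j) (Dv (ee k) ψ)) p
          - (starRingEnd ℂ) (Dv (ee j) (Dv (ee j) ψ) p) * Dv (ee k) ψ p).re := by
    intro j
    unfold Gf
    rw [Dv_const_mul ((hψ.conj'.mul ((hψ.dv (ee k)).dv (ee j))).sub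
        ((hψ.dv (ee j)).conj'.mul (hψ.dv (ee k)))).re'.dvdiff]
    rw [Dv_re ((hψ.conj'.mul ((hψ.dv (ee k)).dv (ee j))).sub
        ((hψ.dv (ee j)).conj'.mul (hψ.dv (ee k)))).dvdiff]
    rw [Dv_sub (hψ.conj'.mul ((hψ.dv (ee k)).dv (ee j))).dvdiff
        ((hψ.dv (ee j)).conj'.mul (hψ.dv (ee k))).dvdiff]
    rw [Dv_mul hψ.conj'.dvdiff ((hψ.dv (ee k)).dv (ee j)).dvdiff]
    rw [Dv_mul (hψ.dv (ee j)).conj'.dvdiff (hψ.dv (ee k)).dvdiff]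
    rw [Dv_conj hψ.dvdiff, Dv_conj (hψ.dv (ee j)).dvdiff]
    congr 1
    ring
  -- assemble
  have e4 : Dv et ψ p = (Complex.I * (hbar : ℂ))⁻¹ *
      (-(((hbar ^ 2 / (2 * m) : ℝ)) : ℂ) * S p + ((V p.2 : ℝ) : ℂ) * ψ p) := by
    rw [show Dv et ψ = dT ψ from rfl, hdt]
  rw [e1, hcomm, e2, e4]
  simp only [e3]
  rw [← Finset.mul_sum]
  have hsum : ∑ j : Fin d, ((starRingEnd ℂ) (ψ p) * Dv (ee j) (Dv (ee j) (Dv (ee k) ψ)) p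
      - (starRingEnd ℂ) (Dv (ee j) (Dv (ee j) ψ) p) * Dv (ee k) ψ p).re
      = ((starRingEnd ℂ) (ψ p) * (∑ j, Dv (ee j) (Dv (ee j) (Dv (ee k) ψ)) p)
        - (starRingEnd ℂ) (S p) * Dv (ee k) ψ p).re := by
    rw [← Complex.re_sum]
    congr 1
    rw [Finset.sum_sub_distrib, ← Finset.mul_sum, ← Finset.sum_mul, hSdef, map_sum]
  rw [hsum]
  set a := ψ p
  set ak := Dv (ee k) ψ p
  set s := S p
  set s' := ∑ j, Dv (ee j) (Dv (ee j) (Dv (ee k) ψ)) p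
  set V0 := V p.2
  set Vk := fderiv ℝ V p.2 (Pi.single k (1:ℝ))
  have hinv : (Complex.I * (hbar : ℂ))⁻¹ = ((hbar⁻¹ : ℝ) : ℂ) * (-Complex.I) := by
    rw [mul_inv, Complex.inv_I, Complex.ofReal_inv]
    ring
  rw [hinv]
  unfold rhoF
  simp only [Complex.mul_re, Complex.mul_im, Complex.add_re, Complex.add_im,
    Complex.sub_re, Complex.sub_im, Complex.neg_re, Complex.neg_im,
    Complex.conj_re, Complex.conj_im, Complex.I_re, Complex.I_im,
    Complex.ofReal_re, Complex.ofReal_im, Complex.normSq_apply]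
  field_simp
  ring


include hψ in
lemma JF_smooth (hbar m : ℝ) (k : Fin d) : ContDiff ℝ (⊤:ℕ∞) (JF hbar m ψ k) := by
  show ContDiff ℝ (⊤:ℕ∞) (fun q => (hbar / m) * ((starRingEnd ℂ) (ψ q) * Dv (ee k) ψ q).im)
  exact contDiff_const.mul (hψ.conj'.mul (hψ.dv (ee k))).im'

include hψ in
lemma main' {V : (Fin d → ℝ) → ℝ} (hbar m : ℝ) (hh : hbar ≠ 0) (hm : m ≠ 0)
    (hV : ContDiff ℝ (⊤:ℕ∞) V) (hnz : ∀ q, ψ q ≠ 0)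
    (hSch : ∀ q : EE d, Complex.I * (hbar : ℂ) * dT ψ q =
        -(((hbar ^ 2 / (2 * m) : ℝ)) : ℂ) * (∑ j, dXj j (dXj j ψ) q)
          + (V q.2 : ℂ) * ψ q)
    (p : EE d) (k : Fin d) :
    Dv et (fun q => rhoF ψ q * uF hbar m ψ k q) p
      + ∑ j, Dv (ee j) (fun q => rhoF ψ q * uF hbar m ψ j q * uF hbar m ψ k q) p =
    (hbar ^ 2 / (4 * m ^ 2)) *
        ∑ j, Dv (ee j) (fun q =>
          rhoF ψ q * Dv (ee j) (Dv (ee k) (fun z => Real.log (rhoF ψ z))) q) p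
      - (1 / m) * rhoF ψ p * fderiv ℝ V p.2 (Pi.single k (1 : ℝ)) := by
  have hρ := rhoF_smooth hψ
  have hρne : ∀ z, rhoF ψ z ≠ 0 := fun z => (Complex.normSq_pos.mpr (hnz z)).ne'
  have hc1 : (hbar ^ 2 / (4 * m ^ 2)) ≠ 0 := by positivity
  -- the first term
  rw [show (fun q => rhoF ψ q * uF hbar m ψ k q) = JF hbar m ψ k from
    rho_u hψ hbar m hnz k]
  -- per-j analysis
  have hFd : ∀ j : Fin d, DifferentiableAt ℝ
      (fun q => rhoF ψ q * uF hbar m ψ j q * uF hbar m ψ k q) p := by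
    intro j
    have : (fun q => rhoF ψ q * uF hbar m ψ j q * uF hbar m ψ k q)
        = fun q => JF hbar m ψ j q * JF hbar m ψ k q * (rhoF ψ q)⁻¹ := by
      funext q
      unfold uF
      field_simp [hρne q]
      try ring
    rw [this]
    exact ((JF_smooth hψ hbar m j).dvdiff.mul (JF_smooth hψ hbar m k).dvdiff).mul
      (DiffAt_inv hρ.dvdiff (hρne p))
  have key : ∀ j : Fin d,
      (hbar ^ 2 / (4 * m ^ 2)) * Dv (ee j) (fun q =>
        rhoF ψ q * Dv (ee j) (Dv (ee k) (fun z => Real.log (rhoF ψ z))) q) p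
      = Dv (ee j) (fun q => rhoF ψ q * uF hbar m ψ j q * uF hbar m ψ k q) p
        + Dv (ee j) (Gf hbar m ψ j k) p := by
    intro j
    have hA := lemA hψ hbar m hm hnz j k
    have hfun : (fun q => rhoF ψ q * Dv (ee j) (Dv (ee k)
        (fun z => Real.log (rhoF ψ z))) q)
        = fun q => (hbar ^ 2 / (4 * m ^ 2))⁻¹ *
            ((fun q => rhoF ψ q * uF hbar m ψ j q * uF hbar m ψ k q) q
              + Gf hbar m ψ j k q) := by
      funext q
      have := congrFun hA q
      dsimp only at this ⊢
      rw [this]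
      field_simp
      try ring
    rw [hfun]
    rw [Dv_const_mul (((hFd j).fun_add (Gf_smooth hψ hbar m j k).dvdiff))]
    rw [Dv_add (hFd j) (Gf_smooth hψ hbar m j k).dvdiff]
    field_simp
    try ring
  rw [Finset.mul_sum]
  rw [Finset.sum_congr rfl (fun j _ => key j)]
  rw [Finset.sum_add_distrib]
  have hB : Dv et (JF hbar m ψ k) p = ∑ j, Dv (ee j) (Gf hbar m ψ j k) p
      - (1 / m) * rhoF ψ p * fderiv ℝ V p.2 (Pi.single k (1 : ℝ)) :=
    lemB hψ hbar m hh hm hV hSch p k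
  rw [hB]
  ring

end PSI


/-- **Quantum hydrodynamics: the Madelung–Euler equation.**
If `ψ` is a smooth, nowhere vanishing solution of the Schrödinger equation
`iħ ∂_t ψ = −(ħ²/2m)Δ_x ψ + V ψ`, then with `ρ = |ψ|² > 0`,
`J = (ħ/m) Im(conj(ψ) ∇_x ψ)` and `u = J/ρ`, for every `k`:
`∂_t(ρ u_k) + Σ_j ∂_{x_j}(ρ u_j u_k)
  = (ħ²/4m²) Σ_j ∂_{x_j}(ρ ∂_{x_j}∂_{x_k} ln ρ) − (1/m) ρ ∂_{x_k} V`. -/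
theorem madelung_euler_equation {d : ℕ} (hbar m : ℝ)
    (hhbar : 0 < hbar) (hm : 0 < m)
    (V : (Fin d → ℝ) → ℝ) (hV : ContDiff ℝ (⊤ : ℕ∞) V)
    (ψ : ℝ × (Fin d → ℝ) → ℂ) (hψ : ContDiff ℝ (⊤ : ℕ∞) ψ)
    (hnz : ∀ p : ℝ × (Fin d → ℝ), ψ p ≠ 0)
    (hSch : ∀ p : ℝ × (Fin d → ℝ),
      Complex.I * (hbar : ℂ) * dT ψ p =
        -(((hbar ^ 2 / (2 * m) : ℝ)) : ℂ) * (∑ j, dXj j (dXj j ψ) p)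
          + (V p.2 : ℂ) * ψ p) :
    ∀ (p : ℝ × (Fin d → ℝ)) (k : Fin d),
      dT (fun q => rhoF ψ q * uF hbar m ψ k q) p
        + ∑ j, dXj j (fun q => rhoF ψ q * uF hbar m ψ j q * uF hbar m ψ k q) p =
      (hbar ^ 2 / (4 * m ^ 2)) *
          ∑ j, dXj j (fun q =>
            rhoF ψ q * dXj j (fun r => dXj k (fun z => Real.log (rhoF ψ z)) r) q) p
        - (1 / m) * rhoF ψ p * fderiv ℝ V p.2 (Pi.single k (1 : ℝ)) := by
  intro p k
  exact main' (hψ.of_le (by simp)) hbar m hhbar.ne' hm.ne' (hV.of_le (by simp)) hnz hSch p k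

end
end

section
/- (Bohm potential identity) Let ρ ∈ C^∞(ℝ^d) with ρ(x) > 0 for all x ∈ ℝ^d. Then for each k = 1, …, d: Σ_{j=1}^d ∂_{x_j}( ρ(x) ∂_{x_j}∂_{x_k} ln ρ(x) ) = 2 ρ(x) ∂_{x_k}( Δ√ρ(x) / √ρ(x) ). Equivalently, with the Bohm potential P := −(ħ²/2m)·Δ√ρ/√ρ, one has −(ħ²/4m)·∇·(ρ ∇² ln ρ) = ρ ∇P for any constants ħ, m > 0, where (∇²ln ρ)_{jk} = ∂_{x_j}∂_{x_k} ln ρ. -/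
open MeasureTheory Real Complex Filter Topology ENNReal

noncomputable section

/-- Partial derivative `∂_{x_j}` of a real-valued function on `ℝ^d`. -/
def pd {d : ℕ} (j : Fin d) (f : (Fin d → ℝ) → ℝ) (x : Fin d → ℝ) : ℝ :=
  fderiv ℝ f x (Pi.single j (1 : ℝ))

section lemmas
variable {d : ℕ} {f g : (Fin d → ℝ) → ℝ} {x : Fin d → ℝ} {j k : Fin d}

lemma pd_contDiff (h : ContDiff ℝ (⊤ : ℕ∞) f) (j : Fin d) : ContDiff ℝ (⊤ : ℕ∞) (pd j f) := by
  have h1 : ContDiff ℝ (⊤ : ℕ∞) (fderiv ℝ f) := h.fderiv_right (by simp)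
  exact (ContinuousLinearMap.apply ℝ ℝ (Pi.single j (1:ℝ))).contDiff.comp h1

lemma pd_mul (hf : DifferentiableAt ℝ f x) (hg : DifferentiableAt ℝ g x) :
    pd j (fun z => f z * g z) x = pd j f x * g x + f x * pd j g x := by
  unfold pd
  rw [fderiv_fun_mul hf hg]
  simp only [ContinuousLinearMap.add_apply, ContinuousLinearMap.smul_apply, smul_eq_mul]
  ring

lemma pd_inv (hg : DifferentiableAt ℝ g x) (hx : g x ≠ 0) :
    pd j (fun z => (g z)⁻¹) x = -(pd j g x) / g x ^ 2 := by
  unfold pd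
  have h := ((hasDerivAt_inv hx).comp_hasFDerivAt x hg.hasFDerivAt).fderiv
  rw [show (fun z => (g z)⁻¹) = (fun y : ℝ => y⁻¹) ∘ g from rfl, h]
  simp only [ContinuousLinearMap.smul_apply, smul_eq_mul]
  field_simp

lemma pd_div (hf : DifferentiableAt ℝ f x) (hg : DifferentiableAt ℝ g x) (hx : g x ≠ 0) :
    pd j (fun z => f z / g z) x = (pd j f x * g x - f x * pd j g x) / g x ^ 2 := by
  simp only [div_eq_mul_inv]
  rw [pd_mul (g := fun z => (g z)⁻¹) hf (hg.inv hx), pd_inv hg hx]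
  field_simp
  ring

lemma pd_sub (hf : DifferentiableAt ℝ f x) (hg : DifferentiableAt ℝ g x) :
    pd j (fun z => f z - g z) x = pd j f x - pd j g x := by
  unfold pd
  rw [fderiv_fun_sub hf hg]; simp

lemma pd_const_mul (c : ℝ) (hf : DifferentiableAt ℝ f x) :
    pd j (fun z => c * f z) x = c * pd j f x := by
  unfold pd
  rw [fderiv_const_mul hf c]; simp

lemma pd_sum {ι : Type*} (s : Finset ι) {F : ι → (Fin d → ℝ) → ℝ}
    (h : ∀ i ∈ s, DifferentiableAt ℝ (F i) x) :
    pd j (fun z => ∑ i ∈ s, F i z) x = ∑ i ∈ s, pd j (F i) x := by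
  unfold pd
  rw [fderiv_fun_sum h]; simp

lemma pd_log (hf : DifferentiableAt ℝ f x) (hx : f x ≠ 0) :
    pd j (fun z => Real.log (f z)) x = pd j f x / f x := by
  unfold pd
  have h := ((Real.hasDerivAt_log hx).comp_hasFDerivAt x hf.hasFDerivAt).fderiv
  rw [show (fun z => Real.log (f z)) = Real.log ∘ f from rfl, h]
  simp only [ContinuousLinearMap.smul_apply, smul_eq_mul]
  field_simp

lemma pd_comm (h : ContDiff ℝ (⊤ : ℕ∞) f) (j k : Fin d) (x : Fin d → ℝ) :
    pd j (pd k f) x = pd k (pd j f) x := by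
  have hd : DifferentiableAt ℝ (fderiv ℝ f) x :=
    (h.fderiv_right ((by simp) : ((⊤ : ℕ∞) : WithTop ℕ∞) + 1 ≤ ((⊤ : ℕ∞) : WithTop ℕ∞))).differentiable (by simp) x
  have hs := second_derivative_symmetric (f' := fderiv ℝ f)
    (fun y => (h.differentiable (by simp) y).hasFDerivAt) hd.hasFDerivAt
    (Pi.single j (1:ℝ)) (Pi.single k (1:ℝ))
  unfold pd
  rw [fderiv_clm_apply hd (differentiableAt_const _),
      fderiv_clm_apply hd (differentiableAt_const _)]
  simpa using hs

end lemmas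

/-- Square-root of a function. -/
def Sq {d : ℕ} (ρ : (Fin d → ℝ) → ℝ) : (Fin d → ℝ) → ℝ := fun z => Real.sqrt (ρ z)

/-- **Bohm potential identity.**
For `ρ ∈ C^∞(ℝ^d)` with `ρ > 0` everywhere, one has, for each `k`,
`Σ_j ∂_{x_j}(ρ ∂_{x_j}∂_{x_k} ln ρ) = 2 ρ ∂_{x_k}(Δ√ρ / √ρ)`;
equivalently, `−(ħ²/4m) ∇·(ρ ∇² ln ρ) = ρ ∇P` with the Bohm potential
`P = −(ħ²/2m) Δ√ρ/√ρ`. -/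
theorem bohm_potential_identity {d : ℕ} (ρ : (Fin d → ℝ) → ℝ)
    (hρ : ContDiff ℝ (⊤ : ℕ∞) ρ) (hpos : ∀ x, 0 < ρ x) :
    ∀ (x : Fin d → ℝ) (k : Fin d),
      ∑ j, pd j (fun z => ρ z * pd j (pd k (fun s => Real.log (ρ s))) z) x =
        2 * ρ x *
          pd k (fun z =>
            (∑ j, pd j (pd j (fun s => Real.sqrt (ρ s))) z) / Real.sqrt (ρ z)) x := by
  intro x k
  show ∑ j, pd j (fun z => ρ z * pd j (pd k (fun s => Real.log (ρ s))) z) x =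
        2 * ρ x * pd k (fun z => (∑ j, pd j (pd j (Sq ρ)) z) / Sq ρ z) x
  -- basic facts about S := Sq ρ
  have hS : ContDiff ℝ (⊤ : ℕ∞) (Sq ρ) := by
    rw [contDiff_iff_contDiffAt]
    intro y
    exact (Real.contDiffAt_sqrt (hpos y).ne').comp y hρ.contDiffAt
  have hSpos : ∀ z, 0 < Sq ρ z := fun z => Real.sqrt_pos.mpr (hpos z)
  have hρS : ∀ z, ρ z = Sq ρ z * Sq ρ z := fun z => (Real.mul_self_sqrt (hpos z).le).symm
  have hρfun : ρ = fun z => Sq ρ z * Sq ρ z := funext hρS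
  have dS : ∀ z, DifferentiableAt ℝ (Sq ρ) z := fun z => hS.differentiable (by simp) z
  have dρ : ∀ z, DifferentiableAt ℝ ρ z := fun z => hρ.differentiable (by simp) z
  have dpdS : ∀ (i : Fin d) z, DifferentiableAt ℝ (pd i (Sq ρ)) z :=
    fun i z => (pd_contDiff hS i).differentiable (by simp) z
  have dpdpdS : ∀ (i i' : Fin d) z, DifferentiableAt ℝ (pd i (pd i' (Sq ρ))) z :=
    fun i i' z => (pd_contDiff (pd_contDiff hS i') i).differentiable (by simp) z
  -- derivative of ρ
  have hpdρ : ∀ (i : Fin d) z, pd i ρ z = 2 * Sq ρ z * pd i (Sq ρ) z := by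
    intro i z
    have h1 := congrFun (congrArg (pd i) hρfun) z
    rw [h1, pd_mul (dS z) (dS z)]
    ring
  -- derivative of log ρ
  have hlog : pd k (fun s => Real.log (ρ s)) = fun z => (2 * pd k (Sq ρ) z) / Sq ρ z := by
    funext z
    rw [pd_log (dρ z) (hpos z).ne', hpdρ k z, hρS z]
    have := (hSpos z).ne'
    field_simp
  -- the function inside the outer ∂_j, rewritten
  have hC : ∀ j : Fin d, (fun z => ρ z * pd j (pd k (fun s => Real.log (ρ s))) z)
      = fun z => 2 * (pd j (pd k (Sq ρ)) z * Sq ρ z - pd k (Sq ρ) z * pd j (Sq ρ) z) := by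
    intro j
    funext z
    rw [hlog]
    rw [pd_div (f := fun w => 2 * pd k (Sq ρ) w) (g := Sq ρ)
        ((dpdS k z).const_mul 2) (dS z) (hSpos z).ne']
    rw [pd_const_mul 2 (dpdS k z)]
    rw [hρS z]
    have := (hSpos z).ne'
    field_simp
  -- compute each term of the sum
  have hterm : ∀ j : Fin d,
      pd j (fun z => ρ z * pd j (pd k (fun s => Real.log (ρ s))) z) x
      = 2 * (pd j (pd j (pd k (Sq ρ))) x * Sq ρ x - pd k (Sq ρ) x * pd j (pd j (Sq ρ)) x) := by
    intro j
    rw [hC j]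
    rw [pd_const_mul (f := fun z => pd j (pd k (Sq ρ)) z * Sq ρ z - pd k (Sq ρ) z * pd j (Sq ρ) z) 2 (((dpdpdS j k x).mul (dS x)).sub ((dpdS k x).mul (dpdS j x)))]
    rw [pd_sub (f := fun z => pd j (pd k (Sq ρ)) z * Sq ρ z) (g := fun z => pd k (Sq ρ) z * pd j (Sq ρ) z) ((dpdpdS j k x).mul (dS x)) ((dpdS k x).mul (dpdS j x))]
    rw [pd_mul (dpdpdS j k x) (dS x), pd_mul (dpdS k x) (dpdS j x)]
    ring
  -- compute the RHS
  rw [pd_div (f := fun z => ∑ j, pd j (pd j (Sq ρ)) z) (g := Sq ρ)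
      (DifferentiableAt.fun_sum (fun i _ => dpdpdS i i x)) (dS x) (hSpos x).ne']
  rw [pd_sum Finset.univ (fun i _ => dpdpdS i i x)]
  -- commute the third derivatives
  have hswap : ∀ j : Fin d, pd k (pd j (pd j (Sq ρ))) x = pd j (pd j (pd k (Sq ρ))) x := by
    intro j
    rw [pd_comm (pd_contDiff hS j) k j x]
    have h2 : pd k (pd j (Sq ρ)) = pd j (pd k (Sq ρ)) :=
      funext fun w => pd_comm hS k j w
    exact congrFun (congrArg (pd j) h2) x
  simp only [hswap]
  simp only [hterm]
  rw [hρS x]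
  have hne := (hSpos x).ne'
  rw [Finset.sum_congr rfl (fun j _ => by
    rw [mul_sub] : ∀ j ∈ Finset.univ, (2:ℝ) * (pd j (pd j (pd k (Sq ρ))) x * Sq ρ x - pd k (Sq ρ) x * pd j (pd j (Sq ρ)) x) = 2 * (pd j (pd j (pd k (Sq ρ))) x * Sq ρ x) - 2 * (pd k (Sq ρ) x * pd j (pd j (Sq ρ)) x))]
  rw [Finset.sum_sub_distrib, ← Finset.mul_sum, ← Finset.mul_sum, ← Finset.sum_mul, ← Finset.mul_sum]
  field_simp
end
end
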